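/- Fix a real number p < 0. Define Ei(x) = ∫_{x}^{∞} e^{−v}/v dv for x > 0, and for integers 1 ≤ b ≤ k let H(b,k) = Σ_{j=b+1}^{k} 1/j (with H(k,k) = 0) and c_{b,k,p} = (1/p)·( ((k+1)/b)^{p}/(1−p) − 1 ) / (1 + H(b,k)). Then lim_{k→∞} (1/k)·Σ_{b=1}^{k} c_{b,k,p}² = (1/(p²(1−p)²))·(1 − e^{1−2p}(1−2p)Ei(1−2p)) − (2/(p²(1−p)))·(1 − e^{1−p}(1−p)Ei(1−p)) + (1/p²)·(1 − e·Ei(1)). -/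

import Mathlib

set_option maxHeartbeats 1000000

open Finset Filter Real MeasureTheory Set intervalIntegral Topology

/-- The exponential integral `Ei(x) = ∫_{x}^{∞} e^{−v}/v dv` (for `x > 0`). -/
noncomputable def Ei (x : ℝ) : ℝ := ∫ v in Set.Ioi x, Real.exp (-v) / v


lemma ei_meas : Measurable (fun v : ℝ => Real.exp (-v) / v) :=
  (Real.measurable_exp.comp measurable_neg).div measurable_id

lemma integrableOn_ei {a : ℝ} (ha : 0 < a) :
    IntegrableOn (fun v : ℝ => Real.exp (-v) / v) (Set.Ioi a) := by
  have hexp := (exp_neg_integrableOn_Ioi a one_pos).const_mul (1/a)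
  refine Integrable.mono hexp ei_meas.aestronglyMeasurable.restrict ?_
  filter_upwards [MeasureTheory.ae_restrict_mem measurableSet_Ioi] with v hv
  have hva : a < v := hv
  have hv0 : 0 < v := lt_trans ha hva
  rw [Real.norm_eq_abs, Real.norm_eq_abs, abs_of_nonneg (by positivity),
    abs_of_nonneg (by positivity : (0:ℝ) ≤ (1/a) * Real.exp (-1*v)), neg_one_mul, one_div,
    inv_mul_eq_div]
  exact div_le_div_of_nonneg_left (Real.exp_pos _).le ha hva.le

lemma ei_nonneg {x : ℝ} (hx : 0 < x) : 0 ≤ Ei x := by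
  refine MeasureTheory.setIntegral_nonneg measurableSet_Ioi fun v hv => ?_
  have : 0 < v := lt_trans hx hv
  positivity

lemma ei_le {x : ℝ} (hx : 0 < x) : Ei x ≤ Real.exp (-x) / x := by
  have h1 : Ei x ≤ ∫ v in Set.Ioi x, Real.exp (-v) / x := by
    refine MeasureTheory.setIntegral_mono_on (integrableOn_ei hx)
      (((exp_neg_integrableOn_Ioi x one_pos).congr_fun (fun v _ => by rw [neg_one_mul])
        measurableSet_Ioi).div_const x) measurableSet_Ioi fun v hv => ?_
    exact div_le_div_of_nonneg_left (Real.exp_pos _).le hx (le_of_lt hv)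
  calc Ei x ≤ ∫ v in Set.Ioi x, Real.exp (-v) / x := h1
    _ = (∫ v in Set.Ioi x, Real.exp (-v)) / x := by rw [MeasureTheory.integral_div]
    _ = Real.exp (-x) / x := by rw [integral_exp_neg_Ioi]

lemma ei_tendsto_zero : Tendsto Ei atTop (nhds 0) := by
  have h1 : Tendsto (fun x : ℝ => Real.exp (-x) / x) atTop (nhds 0) := by
    have := Real.tendsto_exp_neg_atTop_nhds_zero
    have h2 : Tendsto (fun x : ℝ => x⁻¹) atTop (nhds 0) := tendsto_inv_atTop_zero
    simpa [div_eq_mul_inv] using this.mul h2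
  refine squeeze_zero' ?_ ?_ h1
  · filter_upwards [eventually_gt_atTop 0] with x hx using ei_nonneg hx
  · filter_upwards [eventually_gt_atTop 0] with x hx using ei_le hx

lemma ei_split {a t : ℝ} (ha : 0 < a) (hat : a ≤ t) :
    Ei a = (∫ v in a..t, Real.exp (-v) / v) + Ei t := by
  have ht : 0 < t := lt_of_lt_of_le ha hat
  have hunion : Set.Ioi a = Set.Ioc a t ∪ Set.Ioi t := (Set.Ioc_union_Ioi_eq_Ioi hat).symm
  have hdisj : Disjoint (Set.Ioc a t) (Set.Ioi t) := by
    simp [Set.disjoint_left]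
  rw [intervalIntegral.integral_of_le hat]
  unfold Ei
  rw [hunion, MeasureTheory.setIntegral_union hdisj measurableSet_Ioi
    ((integrableOn_ei ha).mono_set (by rw [hunion]; exact Set.subset_union_left))
    (integrableOn_ei ht)]

lemma ei_hasDerivAt {x : ℝ} (hx : 0 < x) :
    HasDerivAt Ei (-(Real.exp (-x) / x)) x := by
  set a := x / 2 with ha_def
  have ha : 0 < a := by positivity
  have hax : a < x := by simp [ha_def]; linarith
  have hint : IntervalIntegrable (fun v => Real.exp (-v) / v) volume a x := by
    rw [intervalIntegrable_iff_integrableOn_Ioc_of_le hax.le]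
    exact (integrableOn_ei ha).mono_set Set.Ioc_subset_Ioi_self
  have hcont : ContinuousAt (fun v => Real.exp (-v) / v) x :=
    ((Real.continuous_exp.comp continuous_neg).continuousAt).div continuousAt_id (ne_of_gt hx)
  have hd : HasDerivAt (fun t => Ei a - ∫ v in a..t, Real.exp (-v) / v)
      (-(Real.exp (-x) / x)) x := by
    have := (intervalIntegral.integral_hasDerivAt_right hint
      (ei_meas.stronglyMeasurable.stronglyMeasurableAtFilter) hcont).const_sub (Ei a)
    simpa using this
  refine hd.congr_of_eventuallyEq ?_
  filter_upwards [Ioi_mem_nhds hax] with t ht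
  have := ei_split ha (le_of_lt ht)
  linarith

lemma ei_continuousAt {x : ℝ} (hx : 0 < x) : ContinuousAt Ei x := (ei_hasDerivAt hx).continuousAt



lemma keyDeriv {c x : ℝ} (hc : 1 ≤ c) (hx : 0 < x) (hx1 : x < 1) :
    HasDerivAt (fun y => y ^ c / (1 - Real.log y) - c * Real.exp c * Ei (c * (1 - Real.log y)))
      (x ^ (c - 1) / (1 - Real.log x) ^ 2) x := by
  have hc0 : 0 < c := lt_of_lt_of_le one_pos hc
  have hlogneg : Real.log x < 0 := Real.log_neg hx hx1
  have hL : 0 < 1 - Real.log x := by linarith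
  have hu : 0 < c * (1 - Real.log x) := mul_pos hc0 hL
  have hden : HasDerivAt (fun y => 1 - Real.log y) (-x⁻¹) x := by
    simpa using ((Real.hasDerivAt_log (ne_of_gt hx)).const_sub 1)
  have hpow : HasDerivAt (fun y => y ^ c) (c * x ^ (c - 1)) x :=
    Real.hasDerivAt_rpow_const (Or.inl (ne_of_gt hx))
  have hquot := hpow.div hden (ne_of_gt hL)
  have harg : HasDerivAt (fun y => c * (1 - Real.log y)) (c * -x⁻¹) x := hden.const_mul c
  have hEi : HasDerivAt (fun y => Ei (c * (1 - Real.log y)))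
      (-(Real.exp (-(c * (1 - Real.log x))) / (c * (1 - Real.log x))) * (c * -x⁻¹)) x :=
    by have := (ei_hasDerivAt hu).comp x harg; exact this
  have htotal := hquot.sub ((hEi.const_mul (c * Real.exp c)))
  refine htotal.congr_deriv ?_
  have h1 : x ^ c = x ^ (c - 1) * x := by
    rw [← Real.rpow_add_one (ne_of_gt hx)]; ring_nf
  have h2 : Real.exp c * Real.exp (-(c * (1 - Real.log x))) = x ^ c := by
    rw [← Real.exp_add, Real.rpow_def_of_pos hx]; ring_nf
  set L := 1 - Real.log x
  set X2 := x ^ (c - 1)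
  have h2' : Real.exp (-(c * L)) = x ^ c / Real.exp c := by
    rw [eq_div_iff (Real.exp_ne_zero c), mul_comm, h2]
  rw [h2', h1]
  field_simp
  ring

noncomputable def Ffun (c : ℝ) (x : ℝ) : ℝ :=
  if x ≤ 0 then 0 else x ^ c / (1 - Real.log x) - c * Real.exp c * Ei (c * (1 - Real.log x))

lemma Ffun_eq_on_pos {c x : ℝ} (hx : 0 < x) :
    Ffun c x = x ^ c / (1 - Real.log x) - c * Real.exp c * Ei (c * (1 - Real.log x)) := by
  simp [Ffun, not_le.mpr hx]

lemma Ffun_contOn {c : ℝ} (hc : 1 ≤ c) : ContinuousOn (Ffun c) (Set.Icc 0 1) := by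
  have hc0 : 0 < c := lt_of_lt_of_le one_pos hc
  intro x hx
  rcases eq_or_lt_of_le hx.1 with h0 | hpos
  · -- x = 0
    subst h0
    have hIcc : Set.Icc (0:ℝ) 1 = insert 0 (Set.Ioc 0 1) := by
      rw [← Set.Icc_union_Ioc_eq_Icc (le_refl (0:ℝ)) zero_le_one, Set.Icc_self,
        Set.singleton_union]
    have hF0 : Ffun c 0 = 0 := by simp [Ffun]
    rw [ContinuousWithinAt, hIcc, nhdsWithin_insert, hF0]
    refine Tendsto.sup ?_ ?_
    · simpa [hF0] using tendsto_pure_nhds (Ffun c) 0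
    · have h1 : Tendsto (fun x : ℝ => x ^ c / (1 - Real.log x)) (𝓝[Set.Ioc (0:ℝ) 1] 0)
          (nhds 0) := by
        refine squeeze_zero' ?_ ?_ (tendsto_id.mono_left nhdsWithin_le_nhds)
        · filter_upwards [self_mem_nhdsWithin] with x hx
          have hl := Real.log_nonpos hx.1.le hx.2
          have hL : (0:ℝ) < 1 - Real.log x := by linarith
          exact div_nonneg (Real.rpow_nonneg hx.1.le c) hL.le
        · filter_upwards [self_mem_nhdsWithin] with x hx
          have hl := Real.log_nonpos hx.1.le hx.2
          have hL : (1:ℝ) ≤ 1 - Real.log x := by linarith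
          calc x ^ c / (1 - Real.log x) ≤ x ^ c / 1 :=
                div_le_div_of_nonneg_left (Real.rpow_nonneg hx.1.le c) one_pos hL
            _ = x ^ c := div_one _
            _ ≤ x ^ (1:ℝ) := Real.rpow_le_rpow_of_exponent_ge hx.1 hx.2 hc
            _ = x := Real.rpow_one x
      have harg : Tendsto (fun x : ℝ => c * (1 - Real.log x)) (𝓝[Set.Ioc (0:ℝ) 1] 0) atTop := by
        apply Tendsto.const_mul_atTop hc0
        have hlog : Tendsto Real.log (𝓝[Set.Ioc (0:ℝ) 1] 0) atBot :=
          Real.tendsto_log_nhdsGT_zero.mono_left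
            (nhdsWithin_mono _ Set.Ioc_subset_Ioi_self)
        simpa [sub_eq_add_neg, Function.comp] using
          tendsto_atTop_add_const_left _ 1 (tendsto_neg_atBot_atTop.comp hlog)
      have h2 : Tendsto (fun x : ℝ => c * Real.exp c * Ei (c * (1 - Real.log x)))
          (𝓝[Set.Ioc (0:ℝ) 1] 0) (nhds 0) := by
        have := (ei_tendsto_zero.comp harg).const_mul (c * Real.exp c)
        simpa using this
      have hcong : (fun x : ℝ => x ^ c / (1 - Real.log x)
          - c * Real.exp c * Ei (c * (1 - Real.log x))) =ᶠ[𝓝[Set.Ioc (0:ℝ) 1] 0] Ffun c := by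
        filter_upwards [self_mem_nhdsWithin] with x hx
        exact (Ffun_eq_on_pos hx.1).symm
      simpa using Tendsto.congr' hcong (h1.sub h2)
  · -- x > 0
    apply ContinuousAt.continuousWithinAt
    have hl := Real.log_nonpos hpos.le hx.2
    have hL : (0:ℝ) < 1 - Real.log x := by linarith
    have hu : 0 < c * (1 - Real.log x) := mul_pos hc0 hL
    have hformula : ContinuousAt (fun y : ℝ => y ^ c / (1 - Real.log y)
        - c * Real.exp c * Ei (c * (1 - Real.log y))) x := by
      have hlogc : ContinuousAt (fun y : ℝ => 1 - Real.log y) x :=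
        continuousAt_const.sub (Real.continuousAt_log (ne_of_gt hpos))
      have hg : ContinuousAt (fun y : ℝ => c * (1 - Real.log y)) x := continuousAt_const.mul hlogc
      have hEiC := ContinuousAt.comp (x := x) (f := fun y : ℝ => c * (1 - Real.log y))
        (ei_continuousAt hu) hg
      exact ((Real.continuousAt_rpow_const x c (Or.inl (ne_of_gt hpos))).div hlogc
          (ne_of_gt hL)).sub (continuousAt_const.mul hEiC)
    refine hformula.congr ?_
    filter_upwards [Ioi_mem_nhds hpos] with y hy
    exact (Ffun_eq_on_pos hy).symm

lemma intInt {c : ℝ} (hc : 1 ≤ c) :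
    IntervalIntegrable (fun x : ℝ => x ^ (c - 1) / (1 - Real.log x) ^ 2) volume 0 1 := by
  have hcpow : Continuous fun x : ℝ => x ^ (c - 1) := by
    rw [continuous_iff_continuousAt]
    exact fun x => Real.continuousAt_rpow_const x (c - 1) (Or.inr (by linarith))
  have hmeas : Measurable fun x : ℝ => x ^ (c - 1) / (1 - Real.log x) ^ 2 :=
    hcpow.measurable.div ((measurable_const.sub Real.measurable_log).pow_const 2)
  rw [intervalIntegrable_iff_integrableOn_Ioc_of_le zero_le_one]
  apply Measure.integrableOn_of_bounded (M := 1) measure_Ioc_lt_top.ne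
    hmeas.aestronglyMeasurable
  filter_upwards [MeasureTheory.ae_restrict_mem measurableSet_Ioc] with x hx
  have hl := Real.log_nonpos hx.1.le hx.2
  have hL : (1:ℝ) ≤ 1 - Real.log x := by linarith
  have hL2 : (1:ℝ) ≤ (1 - Real.log x) ^ 2 := by nlinarith
  have hnum : x ^ (c - 1) ≤ 1 := Real.rpow_le_one hx.1.le hx.2 (by linarith)
  rw [Real.norm_eq_abs, abs_of_nonneg (div_nonneg (Real.rpow_nonneg hx.1.le _) (by positivity))]
  calc x ^ (c - 1) / (1 - Real.log x) ^ 2 ≤ x ^ (c - 1) / 1 :=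
        div_le_div_of_nonneg_left (Real.rpow_nonneg hx.1.le _) one_pos hL2
    _ = x ^ (c - 1) := div_one _
    _ ≤ 1 := hnum


lemma integral_key {c : ℝ} (hc : 1 ≤ c) :
    ∫ x in (0:ℝ)..1, x ^ (c - 1) / (1 - Real.log x) ^ 2 = 1 - c * Real.exp c * Ei c := by
  have hint := intInt hc
  have hderiv : ∀ x ∈ Set.Ioo (0:ℝ) 1, HasDerivWithinAt (Ffun c)
      (x ^ (c - 1) / (1 - Real.log x) ^ 2) (Set.Ioi x) x := by
    intro x hx
    have hd : HasDerivAt (Ffun c) (x ^ (c - 1) / (1 - Real.log x) ^ 2) x := by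
      refine (keyDeriv hc hx.1 hx.2).congr_of_eventuallyEq ?_
      filter_upwards [Ioi_mem_nhds hx.1] with y hy
      exact Ffun_eq_on_pos hy
    exact hd.hasDerivWithinAt
  rw [intervalIntegral.integral_eq_sub_of_hasDeriv_right_of_le zero_le_one (Ffun_contOn hc)
    hderiv hint]
  have hF1 : Ffun c 1 = 1 - c * Real.exp c * Ei c := by
    simp [Ffun, Real.log_one]
  have hF0 : Ffun c 0 = 0 := by simp [Ffun]
  rw [hF1, hF0, sub_zero]

/-- The tail harmonic sum `H(b,k) = ∑_{j=b+1}^{k} 1/j`, with `H(k,k) = 0`. -/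
noncomputable def Htail (b k : ℕ) : ℝ := ∑ j ∈ Finset.Icc (b + 1) k, (1 : ℝ) / (j : ℝ)

/-- The asymptotic bias coefficient of the lower-trimmed Hill statistic `T_{b,k}`:
`c_{b,k,p} = (1/p)·( ((k+1)/b)^p/(1−p) − 1 )/(1 + H(b,k))`. -/
noncomputable def cCoeff (b k : ℕ) (p : ℝ) : ℝ :=
  (1 / p) * ((((k : ℝ) + 1) / (b : ℝ)) ^ p / (1 - p) - 1) / (1 + Htail b k)


lemma log_sub_le {a b : ℝ} (ha : 0 < a) (hab : a ≤ b) :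
    Real.log b - Real.log a ≤ (b - a) / a := by
  have hb : 0 < b := lt_of_lt_of_le ha hab
  rw [← Real.log_div (ne_of_gt hb) (ne_of_gt ha)]
  have := Real.log_le_sub_one_of_pos (div_pos hb ha)
  calc Real.log (b / a) ≤ b / a - 1 := this
    _ = (b - a) / a := by field_simp
lemma le_log_sub {a b : ℝ} (ha : 0 < a) (hab : a ≤ b) :
    (b - a) / b ≤ Real.log b - Real.log a := by
  have hb : 0 < b := lt_of_lt_of_le ha hab
  have := Real.log_le_sub_one_of_pos (div_pos ha hb)
  rw [Real.log_div (ne_of_gt ha) (ne_of_gt hb)] at this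
  have h2 : a / b - 1 = -((b - a)/b) := by field_simp; ring
  linarith [this.trans_eq h2]

lemma Htail_le {b k : ℕ} (hb : 1 ≤ b) (hbk : b ≤ k) :
    Htail b k ≤ Real.log k - Real.log b := by
  induction k, hbk using Nat.le_induction with
  | base => simp [Htail]
  | succ k hbk ih =>
    have hk1 : (1:ℝ) ≤ k := by exact_mod_cast hb.trans hbk
    have hstep : (1:ℝ) / (k+1) ≤ Real.log (k+1) - Real.log k := by
      have := le_log_sub (a := (k:ℝ)) (b := (k:ℝ)+1) (by linarith) (by linarith)
      simpa using this
    have hsum : Htail b (k+1) = Htail b k + 1 / ((k:ℝ)+1) := by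
      unfold Htail
      rw [Finset.sum_Icc_succ_top (by omega : b + 1 ≤ k + 1)]
      push_cast; ring
    rw [hsum]
    push_cast
    linarith

lemma le_Htail {b k : ℕ} (hb : 1 ≤ b) (hbk : b ≤ k) :
    Real.log (k+1) - Real.log (b+1) ≤ Htail b k := by
  induction k, hbk using Nat.le_induction with
  | base => simp [Htail]
  | succ k hbk ih =>
    have hk1 : (1:ℝ) ≤ k := by exact_mod_cast hb.trans hbk
    have hstep : Real.log (k+1+1) - Real.log (k+1) ≤ (1:ℝ) / (k+1) := by
      have := log_sub_le (a := (k:ℝ)+1) (b := (k:ℝ)+2) (by linarith) (by linarith)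
      have h2 : ((k:ℝ)+2 - ((k:ℝ)+1)) / ((k:ℝ)+1) = 1 / ((k:ℝ)+1) := by ring_nf
      rw [h2] at this
      convert this using 3 <;> push_cast <;> ring
    have hsum : Htail b (k+1) = Htail b k + 1 / ((k:ℝ)+1) := by
      unfold Htail
      rw [Finset.sum_Icc_succ_top (by omega : b + 1 ≤ k + 1)]
      push_cast; ring
    rw [hsum]
    push_cast at hstep ⊢
    linarith

lemma Htail_nonneg (b k : ℕ) : 0 ≤ Htail b k :=
  Finset.sum_nonneg fun j _ => by positivity

noncomputable def Cfun (p : ℝ) (x : ℝ) : ℝ :=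
  (1 / p) * (x ^ (-p) / (1 - p) - 1) / (1 - Real.log x)

lemma cCoeff_abs_le {b k : ℕ} {p : ℝ} (hp : p < 0) (hb : 1 ≤ b) (hbk : b ≤ k) :
    |cCoeff b k p| ≤ 1 / (-p) := by
  have hb0 : (0:ℝ) < b := by exact_mod_cast hb
  have hbase : (1:ℝ) ≤ ((k:ℝ)+1)/b := by
    rw [le_div_iff₀ hb0]
    have : (b:ℝ) ≤ k := by exact_mod_cast hbk
    linarith
  have hpow0 : 0 < (((k:ℝ)+1)/b) ^ p := Real.rpow_pos_of_pos (by linarith) p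
  have hpow1 : (((k:ℝ)+1)/b) ^ p ≤ 1 :=
    Real.rpow_le_one_of_one_le_of_nonpos hbase hp.le
  have h1p : (1:ℝ) ≤ 1 - p := by linarith
  have hnum : |(((k:ℝ)+1)/b) ^ p / (1-p) - 1| ≤ 1 := by
    rw [abs_le]
    constructor
    · have : 0 ≤ (((k:ℝ)+1)/b) ^ p / (1-p) := div_nonneg hpow0.le (by linarith)
      linarith
    · have : (((k:ℝ)+1)/b) ^ p / (1-p) ≤ 1 := by
        rw [div_le_one (by linarith)]; linarith
      linarith
  have hden : (1:ℝ) ≤ 1 + Htail b k := by linarith [Htail_nonneg b k]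
  unfold cCoeff
  rw [abs_div, abs_mul, abs_of_nonneg (le_of_lt (by linarith [Htail_nonneg b k] : (0:ℝ) < 1 + Htail b k))]
  have habs : |1 / p| = 1 / (-p) := by
    rw [abs_div, abs_one, abs_of_neg hp]
  rw [habs]
  have hp' : (0:ℝ) < 1 / (-p) := div_pos one_pos (neg_pos.mpr hp)
  calc 1 / (-p) * |((((k:ℝ)+1)/b) ^ p / (1-p) - 1)| / (1 + Htail b k)
      ≤ 1 / (-p) * 1 / (1 + Htail b k) := by
        apply div_le_div_of_nonneg_right ?_ ?_
        · exact mul_le_mul_of_nonneg_left hnum hp'.le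
        · linarith
    _ ≤ 1 / (-p) * 1 / 1 := by
        apply div_le_div_of_nonneg_left (by linarith) one_pos hden
    _ = 1 / (-p) := by ring

lemma tendsto_cCoeff {p x : ℝ} (hp : p < 0) (hx : x ∈ Set.Ioc (0:ℝ) 1) :
    Tendsto (fun k : ℕ => cCoeff (⌈(k:ℝ)*x⌉₊) k p) atTop (𝓝 (Cfun p x)) := by
  obtain ⟨hx0, hx1⟩ := hx
  have hceil_pos : ∀ k : ℕ, 1 ≤ k → 1 ≤ ⌈(k:ℝ)*x⌉₊ := by
    intro k hk
    exact Nat.ceil_pos.mpr (mul_pos (by exact_mod_cast hk : (0:ℝ) < k) hx0)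
  have hceil_le : ∀ k : ℕ, ⌈(k:ℝ)*x⌉₊ ≤ k := by
    intro k
    refine Nat.ceil_le.mpr ?_
    calc (k:ℝ) * x ≤ (k:ℝ) * 1 := by
          apply mul_le_mul_of_nonneg_left hx1 (Nat.cast_nonneg k)
      _ = (k:ℝ) := mul_one _
  -- ratio tendsto
  have hratio : Tendsto (fun k : ℕ => (⌈(k:ℝ)*x⌉₊ : ℝ) / k) atTop (𝓝 x) := by
    refine tendsto_of_tendsto_of_tendsto_of_le_of_le' (g := fun _ : ℕ => x)
      (h := fun k : ℕ => x + 1/(k:ℝ)) tendsto_const_nhds ?_ ?_ ?_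
    · have : Tendsto (fun k : ℕ => 1/(k:ℝ)) atTop (𝓝 0) := by
        simpa using tendsto_one_div_atTop_nhds_zero_nat (𝕜 := ℝ)
      simpa using tendsto_const_nhds.add this
    · filter_upwards [eventually_ge_atTop 1] with k hk
      have hk0 : (0:ℝ) < k := by exact_mod_cast hk
      rw [le_div_iff₀ hk0, mul_comm]
      exact Nat.le_ceil _
    · filter_upwards [eventually_ge_atTop 1] with k hk
      have hk0 : (0:ℝ) < k := by exact_mod_cast hk
      rw [div_le_iff₀ hk0]
      have := Nat.ceil_lt_add_one (by positivity : (0:ℝ) ≤ (k:ℝ)*x)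
      calc (⌈(k:ℝ)*x⌉₊ : ℝ) ≤ (k:ℝ)*x + 1 := this.le
        _ = (x + 1/k) * k := by field_simp
  have hx0' : x ≠ 0 := ne_of_gt hx0
  have hone : Tendsto (fun k : ℕ => 1 + 1/(k:ℝ)) atTop (𝓝 1) := by
    have : Tendsto (fun k : ℕ => 1/(k:ℝ)) atTop (𝓝 0) := by
      simpa using tendsto_one_div_atTop_nhds_zero_nat (𝕜 := ℝ)
    simpa using tendsto_const_nhds.add this
  have hA : Tendsto (fun k : ℕ => ((k:ℝ)+1)/(⌈(k:ℝ)*x⌉₊ : ℝ)) atTop (𝓝 (1/x)) := by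
    have hdiv := hone.div hratio hx0'
    refine Tendsto.congr' ?_ hdiv
    filter_upwards [eventually_ge_atTop 1] with k hk
    have hk0 : (0:ℝ) < k := by exact_mod_cast hk
    have hc0 : (0:ℝ) < (⌈(k:ℝ)*x⌉₊ : ℝ) := by exact_mod_cast hceil_pos k hk
    simp only [Pi.div_apply]
    field_simp
  have hApos : (0:ℝ) < 1/x := by positivity
  have hpow : Tendsto (fun k : ℕ => (((k:ℝ)+1)/(⌈(k:ℝ)*x⌉₊ : ℝ)) ^ p) atTop
      (𝓝 (x ^ (-p))) := by
    have hc := (Real.continuousAt_rpow_const (1/x) p (Or.inl (ne_of_gt hApos))).tendsto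
    have := hc.comp hA
    have heq : (1/x) ^ p = x ^ (-p) := by
      rw [one_div, Real.inv_rpow hx0.le, ← Real.rpow_neg hx0.le]
    rw [← heq]
    exact this
  -- Htail limit
  have hlog_ratio : Tendsto (fun k : ℕ => Real.log ((⌈(k:ℝ)*x⌉₊:ℝ)/(k:ℝ))) atTop
      (𝓝 (Real.log x)) := ((Real.continuousAt_log hx0').tendsto).comp hratio
  have hratio2 : Tendsto (fun k : ℕ => ((⌈(k:ℝ)*x⌉₊:ℝ)+1)/((k:ℝ)+1)) atTop (𝓝 x) := by
    have hinv : Tendsto (fun k : ℕ => 1/(k:ℝ)) atTop (𝓝 0) := by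
      simpa using tendsto_one_div_atTop_nhds_zero_nat (𝕜 := ℝ)
    have hnum : Tendsto (fun k : ℕ => (⌈(k:ℝ)*x⌉₊:ℝ)/(k:ℝ) + 1/(k:ℝ)) atTop (𝓝 x) := by
      simpa using hratio.add hinv
    have hdiv := hnum.div hone one_ne_zero
    rw [div_one] at hdiv
    refine Tendsto.congr' ?_ hdiv
    filter_upwards [eventually_ge_atTop 1] with k hk
    have hk0 : (0:ℝ) < k := by exact_mod_cast hk
    simp only [Pi.div_apply]
    field_simp
  have hlog_ratio2 : Tendsto (fun k : ℕ => Real.log (((⌈(k:ℝ)*x⌉₊:ℝ)+1)/((k:ℝ)+1))) atTop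
      (𝓝 (Real.log x)) := ((Real.continuousAt_log hx0').tendsto).comp hratio2
  have hH : Tendsto (fun k : ℕ => Htail (⌈(k:ℝ)*x⌉₊) k) atTop (𝓝 (-Real.log x)) := by
    refine tendsto_of_tendsto_of_tendsto_of_le_of_le'
      (g := fun k : ℕ => -Real.log (((⌈(k:ℝ)*x⌉₊:ℝ)+1)/((k:ℝ)+1)))
      (h := fun k : ℕ => -Real.log ((⌈(k:ℝ)*x⌉₊:ℝ)/(k:ℝ)))
      hlog_ratio2.neg hlog_ratio.neg ?_ ?_
    · filter_upwards [eventually_ge_atTop 1] with k hk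
      have h := le_Htail (hceil_pos k hk) (hceil_le k)
      have hc0 : (0:ℝ) < (⌈(k:ℝ)*x⌉₊:ℝ) := by exact_mod_cast hceil_pos k hk
      have hk0 : (0:ℝ) < k := by exact_mod_cast hk
      rw [Real.log_div (by positivity) (by positivity)]
      linarith
    · filter_upwards [eventually_ge_atTop 1] with k hk
      have h := Htail_le (hceil_pos k hk) (hceil_le k)
      have hc0 : (0:ℝ) < (⌈(k:ℝ)*x⌉₊:ℝ) := by exact_mod_cast hceil_pos k hk
      have hk0 : (0:ℝ) < k := by exact_mod_cast hk
      rw [Real.log_div (ne_of_gt hc0) (ne_of_gt hk0)]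
      linarith
  -- assemble
  have hlx : Real.log x ≤ 0 := Real.log_nonpos hx0.le hx1
  have hden_ne : (1:ℝ) + -Real.log x ≠ 0 := by linarith
  have hfinal := (((hpow.div_const (1-p)).sub (tendsto_const_nhds (x := (1:ℝ)))).const_mul
    (1/p)).div (tendsto_const_nhds.add hH) hden_ne
  have : Cfun p x = 1/p * (x ^ (-p) / (1-p) - 1) / (1 + -Real.log x) := by
    unfold Cfun; rw [sub_eq_add_neg 1 (Real.log x)]
  rw [this]
  exact hfinal

lemma step_integral (p : ℝ) {k : ℕ} (hk : 1 ≤ k) :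
    ∫ x in Set.Ioc (0:ℝ) 1, (cCoeff (⌈(k:ℝ)*x⌉₊) k p)^2 =
      (1/(k:ℝ)) * ∑ b ∈ Finset.Icc 1 k, cCoeff b k p ^ 2 := by
  have hk0 : (0:ℝ) < k := by exact_mod_cast hk
  have hconst : ∀ b ∈ Finset.Icc 1 k, ∀ x ∈ Set.Ioc (((b:ℝ)-1)/k) ((b:ℝ)/k),
      ⌈(k:ℝ)*x⌉₊ = b := by
    intro b hb x hx
    simp only [Finset.mem_Icc] at hb
    rw [Nat.ceil_eq_iff (by omega : b ≠ 0)]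
    constructor
    · have : ((b:ℝ)-1)/k < x := hx.1
      rw [div_lt_iff₀ hk0] at this
      have hcast : ((b - 1 : ℕ) : ℝ) = (b:ℝ) - 1 := by
        rw [Nat.cast_sub hb.1]; norm_num
    
      rw [hcast]; linarith [this]
    · have : x ≤ (b:ℝ)/k := hx.2
      rw [le_div_iff₀ hk0] at this
      linarith
  have hsets : Set.Ioc (0:ℝ) 1 = ⋃ b ∈ Finset.Icc 1 k, Set.Ioc (((b:ℝ)-1)/k) ((b:ℝ)/k) := by
    ext x
    simp only [Set.mem_iUnion, Set.mem_Ioc, Finset.mem_Icc]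
    constructor
    · rintro ⟨hx0, hx1⟩
      refine ⟨⌈(k:ℝ)*x⌉₊, ⟨?_, ?_⟩, ?_, ?_⟩
      · exact Nat.ceil_pos.mpr (mul_pos hk0 hx0)
      · exact Nat.ceil_le.mpr (by nlinarith)
      · rw [div_lt_iff₀ hk0]
        have := Nat.ceil_lt_add_one (by positivity : (0:ℝ) ≤ (k:ℝ)*x)
        linarith
      · rw [le_div_iff₀ hk0]
        have := Nat.le_ceil ((k:ℝ)*x)
        linarith
    · rintro ⟨b, ⟨hb1, hbk⟩, hxl, hxr⟩
      have hb1' : (1:ℝ) ≤ b := by exact_mod_cast hb1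
      have hbk' : (b:ℝ) ≤ k := by exact_mod_cast hbk
      constructor
      · have : (0:ℝ) ≤ ((b:ℝ)-1)/k := by
          apply div_nonneg (by linarith) hk0.le
        linarith
      · calc x ≤ (b:ℝ)/k := hxr
          _ ≤ 1 := by rw [div_le_one hk0]; exact hbk'
  have hmeas : ∀ b : ℕ, MeasurableSet (Set.Ioc (((b:ℝ)-1)/k) ((b:ℝ)/k)) :=
    fun b => measurableSet_Ioc
  have key : ∀ m m' : ℕ, m < m' →
      min ((m:ℝ)/k) ((m':ℝ)/k) ≤ max (((m:ℝ)-1)/k) (((m':ℝ)-1)/k) := by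
    intro m m' h
    have h1 : (m:ℝ) ≤ (m':ℝ) - 1 := by
      have : (m:ℝ) + 1 ≤ m' := by exact_mod_cast h
      linarith
    calc min ((m:ℝ)/k) ((m':ℝ)/k) ≤ (m:ℝ)/k := min_le_left _ _
      _ ≤ ((m':ℝ)-1)/k := div_le_div_of_nonneg_right h1 hk0.le
      _ ≤ max (((m:ℝ)-1)/k) (((m':ℝ)-1)/k) := le_max_right _ _
  have hdisj : Set.Pairwise ↑(Finset.Icc 1 k)
      (Function.onFun Disjoint fun b : ℕ => Set.Ioc (((b:ℝ)-1)/k) ((b:ℝ)/k)) := by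
    intro b hb b' hb' hne
    apply Set.Ioc_disjoint_Ioc.mpr
    rcases hne.lt_or_gt with h | h
    · exact key b b' h
    · rw [min_comm, max_comm]
      exact key b' b h
  have hIntOn : ∀ b ∈ Finset.Icc 1 k,
      IntegrableOn (fun x : ℝ => (cCoeff (⌈(k:ℝ)*x⌉₊) k p)^2)
        (Set.Ioc (((b:ℝ)-1)/k) ((b:ℝ)/k)) := by
    intro b hb
    refine IntegrableOn.congr_fun (f := fun _ : ℝ => cCoeff b k p ^ 2)
      (integrableOn_const measure_Ioc_lt_top.ne) ?_ (hmeas b)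
    intro x hx
    simp [hconst b hb x hx]
  rw [hsets, MeasureTheory.integral_biUnion_finset _ (fun b _ => hmeas b) hdisj hIntOn]
  have hval : ∀ b ∈ Finset.Icc 1 k,
      ∫ x in Set.Ioc (((b:ℝ)-1)/k) ((b:ℝ)/k), (cCoeff (⌈(k:ℝ)*x⌉₊) k p)^2
        = cCoeff b k p ^ 2 * (1/(k:ℝ)) := by
    intro b hb
    rw [MeasureTheory.setIntegral_congr_fun (hmeas b)
      (fun x hx => by rw [hconst b hb x hx] : Set.EqOn _ (fun _ => cCoeff b k p ^ 2) _)]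
    rw [MeasureTheory.setIntegral_const, Real.volume_real_Ioc, smul_eq_mul, mul_comm]
    congr 1
    have heq : (b:ℝ)/k - ((b:ℝ)-1)/k = 1/k := by field_simp; ring
    rw [heq]; exact max_eq_left (by positivity : (0:ℝ) ≤ 1/(k:ℝ))
  rw [Finset.sum_congr rfl hval, ← Finset.sum_mul]
  ring

lemma main_tendsto {p : ℝ} (hp : p < 0) :
    Tendsto (fun k : ℕ => (1/(k:ℝ)) * ∑ b ∈ Finset.Icc 1 k, cCoeff b k p ^ 2) atTop
      (𝓝 (∫ x in Set.Ioc (0:ℝ) 1, Cfun p x ^ 2)) := by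
  rw [← tendsto_add_atTop_iff_nat 1]
  have hdc : Tendsto (fun n : ℕ => ∫ x in Set.Ioc (0:ℝ) 1,
      (cCoeff (⌈((n+1:ℕ):ℝ)*x⌉₊) (n+1) p)^2) atTop
      (𝓝 (∫ x in Set.Ioc (0:ℝ) 1, Cfun p x ^2)) := by
    apply MeasureTheory.tendsto_integral_of_dominated_convergence
      (bound := fun _ => (1/(-p))^2)
    · intro n
      apply Measurable.aestronglyMeasurable
      exact ((measurable_from_nat (f := fun b => cCoeff b (n+1) p ^ 2)).comp
        ((measurable_const_mul _).nat_ceil))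
    · exact integrableOn_const measure_Ioc_lt_top.ne
    · intro n
      filter_upwards [MeasureTheory.ae_restrict_mem measurableSet_Ioc] with x hx
      have hn0 : (0:ℝ) < ((n+1:ℕ):ℝ) := by positivity
      have h1 : 1 ≤ ⌈((n+1:ℕ):ℝ)*x⌉₊ := Nat.ceil_pos.mpr (mul_pos hn0 hx.1)
      have h2 : ⌈((n+1:ℕ):ℝ)*x⌉₊ ≤ n+1 := Nat.ceil_le.mpr (by nlinarith [hx.2, hn0.le])
      have hb := cCoeff_abs_le hp h1 h2
      rw [Real.norm_eq_abs, abs_pow]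
      exact pow_le_pow_left₀ (abs_nonneg _) hb 2
    · filter_upwards [MeasureTheory.ae_restrict_mem measurableSet_Ioc] with x hx
      have := ((tendsto_cCoeff hp hx).comp (tendsto_add_atTop_nat 1)).pow 2
      simpa [Function.comp] using this
  refine Tendsto.congr (fun n => ?_) hdc
  exact step_integral p (by omega : 1 ≤ n + 1)

lemma cfun_sq_eq {p : ℝ} (hp : p < 0) {x : ℝ} (hx : x ∈ Set.uIcc (0:ℝ) 1) :
    Cfun p x ^ 2 =
      (1 / (p ^ 2 * (1 - p) ^ 2)) * (x ^ (1 - 2*p - 1) / (1 - Real.log x) ^ 2)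
      - (2 / (p ^ 2 * (1 - p))) * (x ^ (1 - p - 1) / (1 - Real.log x) ^ 2)
      + (1 / p ^ 2) * (x ^ ((1:ℝ) - 1) / (1 - Real.log x) ^ 2) := by
  rw [Set.uIcc_of_le zero_le_one] at hx
  have hp0 : p ≠ 0 := ne_of_lt hp
  have h1p : (0:ℝ) < 1 - p := by linarith
  rcases eq_or_lt_of_le hx.1 with h0 | h0
  · subst h0
    rw [show (1:ℝ) - 2*p - 1 = -(2*p) by ring, show (1:ℝ) - p - 1 = -p by ring]
    rw [Real.zero_rpow (by linarith : -(2*p) ≠ 0), Real.zero_rpow (by linarith : -p ≠ 0),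
      show (1:ℝ) - 1 = 0 by ring, Real.rpow_zero, Real.log_zero]
    unfold Cfun
    rw [Real.zero_rpow (by linarith : -p ≠ 0)]
    field_simp
    rw [Real.log_zero]; ring
  · have hlog : Real.log x ≤ 0 := Real.log_nonpos h0.le hx.2
    have hL : (0:ℝ) < 1 - Real.log x := by linarith
    have hpow : x ^ (1 - 2*p - 1) = x ^ (-p) * x ^ (-p) := by
      rw [← Real.rpow_add h0]; ring_nf
    have hpow2 : x ^ (1 - p - 1) = x ^ (-p) := by ring_nf
    rw [hpow, hpow2, show (1:ℝ) - 1 = 0 by ring, Real.rpow_zero]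
    unfold Cfun
    field_simp
    ring

lemma integral_cfun_sq {p : ℝ} (hp : p < 0) :
    ∫ x in Set.Ioc (0:ℝ) 1, Cfun p x ^ 2 =
      (1 / (p ^ 2 * (1 - p) ^ 2)) * (1 - Real.exp (1 - 2 * p) * (1 - 2 * p) * Ei (1 - 2 * p))
        - (2 / (p ^ 2 * (1 - p))) * (1 - Real.exp (1 - p) * (1 - p) * Ei (1 - p))
        + (1 / p ^ 2) * (1 - Real.exp 1 * Ei 1) := by
  have hc1 : (1:ℝ) ≤ 1 - 2*p := by linarith
  have hc2 : (1:ℝ) ≤ 1 - p := by linarith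
  have hc3 : (1:ℝ) ≤ (1:ℝ) := le_rfl
  have i1 := intInt hc1
  have i2 := intInt hc2
  have i3 := intInt hc3
  have e1 := integral_key hc1
  have e2 := integral_key hc2
  have e3 := integral_key hc3
  rw [← intervalIntegral.integral_of_le zero_le_one]
  rw [intervalIntegral.integral_congr (fun x hx => cfun_sq_eq hp hx)]
  rw [intervalIntegral.integral_add ((i1.const_mul _).sub (i2.const_mul _)) (i3.const_mul _),
    intervalIntegral.integral_sub (i1.const_mul _) (i2.const_mul _),
    intervalIntegral.integral_const_mul, intervalIntegral.integral_const_mul,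
    intervalIntegral.integral_const_mul, e1, e2, e3]
  ring

/-- For `p < 0`, `lim_{k→∞} (1/k)·∑_{b=1}^{k} c_{b,k,p}²
= (1/(p²(1−p)²))·(1 − e^{1−2p}(1−2p)Ei(1−2p)) − (2/(p²(1−p)))·(1 − e^{1−p}(1−p)Ei(1−p))
  + (1/p²)·(1 − e·Ei(1))`. -/
theorem limit_average_bias_coefficient_sq (p : ℝ) (hp : p < 0) :
    Filter.Tendsto
      (fun k : ℕ => (1 / (k : ℝ)) * ∑ b ∈ Finset.Icc 1 k, (cCoeff b k p) ^ 2)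
      Filter.atTop
      (nhds
        ((1 / (p ^ 2 * (1 - p) ^ 2)) *
            (1 - Real.exp (1 - 2 * p) * (1 - 2 * p) * Ei (1 - 2 * p))
          - (2 / (p ^ 2 * (1 - p))) *
            (1 - Real.exp (1 - p) * (1 - p) * Ei (1 - p))
          + (1 / p ^ 2) * (1 - Real.exp 1 * Ei 1))) := by
  have hm := main_tendsto hp
  rw [integral_cfun_sq hp] at hm
  exact hm
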